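/- For integers n > 1 let p_n denote the unique root in (2, ∞) of ψ_n(p) = 2^{1−n} ∑_{k=0}^n C(n,k) (k/n)^{1/p} − 2^{1/p}. Then p_n = 2 + O(n^{−1}); that is, there exists a constant C > 0 such that 0 < p_n − 2 ≤ C/n for all sufficiently large n. -/

import Mathlib

/-! Since `1/p ≤ 1/2`, each `(k/n)^{1/p}` is at least `√(k/n)`, which in turn dominates the
quadratic `(3x - 2x²)/√2` (tangent to `√x` at `x = 1/2`). Summing against the binomial weights
with the first two binomial moments gives `2^{1-n} ∑ C(n,k) (k/n)^{1/p} ≥ √2 (1 - 1/(2n))`.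
On the other hand `2^{1/p} = √2 · 2^{-(p-2)/(2p)}` falls below `√2 (1 - 1/(2n))` once
`p > 2 + 10/n` and `n ≥ 5`. So `ψ_n > 0` beyond `2 + 10/n`, and its root satisfies
`p_n ≤ 2 + 10/n`. -/

/-- `ψ_n(p) = 2^{1−n} ∑_{k=0}^n C(n,k) (k/n)^{1/p} − 2^{1/p}`. -/
noncomputable def psiN (n : ℕ) (p : ℝ) : ℝ :=
  (2 : ℝ) ^ ((1 : ℝ) - (n : ℝ)) *
      ∑ k ∈ Finset.range (n + 1), (n.choose k : ℝ) * ((k : ℝ) / (n : ℝ)) ^ (1 / p)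
    - (2 : ℝ) ^ (1 / p)

open Finset Real

theorem two_mul_sum_range_mul_choose (n : ℕ) :
    2 * ∑ i ∈ range (n + 1), i * n.choose i = n * 2 ^ n := by
  rcases Nat.eq_zero_or_pos n with rfl | hn
  · simp
  rw [Nat.sum_range_mul_choose, mul_left_comm, mul_pow_sub_one hn.ne']

theorem four_mul_sum_range_sq_mul_choose (n : ℕ) :
    4 * ∑ i ∈ range (n + 1), i ^ 2 * n.choose i = n * (n + 1) * 2 ^ n := by
  cases n with
  | zero => simp
  | succ m =>
    have hterm (j : ℕ) :
        (j + 1) ^ 2 * (m + 1).choose (j + 1) = (m + 1) * ((j + 1) * m.choose j) := by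
      rw [mul_left_comm, Nat.add_one_mul_choose_eq]; ring
    rw [sum_range_succ', sum_congr rfl fun j _ => hterm j, ← mul_sum]
    simp only [add_mul, one_mul, sum_add_distrib, Nat.sum_range_choose]
    linear_combination (2 * (m + 1)) * two_mul_sum_range_mul_choose m

theorem sum_range_choose_mul_three_mul_sub_two_mul_sq {n : ℕ} (hn : n ≠ 0) :
    ∑ k ∈ range (n + 1), (n.choose k : ℝ) * (3 * ((k : ℝ) / n) - 2 * ((k : ℝ) / n) ^ 2) =
      (2 : ℝ) ^ n * (1 - 1 / (2 * n)) := by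
  have hmoment₁ : 2 * ∑ k ∈ range (n + 1), (k : ℝ) * (n.choose k : ℝ) = n * 2 ^ n := by
    exact_mod_cast two_mul_sum_range_mul_choose n
  have hmoment₂ : 4 * ∑ k ∈ range (n + 1), (k : ℝ) ^ 2 * (n.choose k : ℝ) =
      n * (n + 1) * 2 ^ n := by
    exact_mod_cast four_mul_sum_range_sq_mul_choose n
  have hterm (k : ℕ) : (n.choose k : ℝ) * (3 * ((k : ℝ) / n) - 2 * ((k : ℝ) / n) ^ 2) =
      3 / n * ((k : ℝ) * n.choose k) - 2 / n ^ 2 * ((k : ℝ) ^ 2 * n.choose k) := by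
    ring
  simp only [hterm, sum_sub_distrib, ← mul_sum]
  have hn' : (n : ℝ) ≠ 0 := Nat.cast_ne_zero.2 hn
  field_simp
  linear_combination (3 * n) * hmoment₁ - hmoment₂

theorem three_mul_sub_two_mul_sq_le_sqrt_two_mul_sqrt {x : ℝ} (hx : 0 ≤ x) :
    3 * x - 2 * x ^ 2 ≤ √2 * √x := by
  have hs := sqrt_nonneg x
  have hx' : √x ^ 2 = x := sq_sqrt hx
  have h2 : √2 ^ 2 = 2 := sq_sqrt zero_le_two
  have hfactor : √2 * √x - (3 * √x ^ 2 - 2 * (√x ^ 2) ^ 2) =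
      √x * (√x + √2) * (√2 * √x - 1) ^ 2 := by
    linear_combination (-(√x ^ 4) - √2 * √x ^ 3 + 2 * √x ^ 2) * h2
  rw [hx'] at hfactor
  have := mul_nonneg (mul_nonneg hs (add_nonneg hs (sqrt_nonneg 2))) (sq_nonneg (√2 * √x - 1))
  linarith

theorem sqrt_two_mul_one_sub_le_psiN_add {n : ℕ} (hn : n ≠ 0) {p : ℝ} (hp : 2 ≤ p) :
    √2 * (1 - 1 / (2 * n)) ≤ psiN n p + 2 ^ (1 / p) := by
  have hn' : (0 : ℝ) < n := by positivity
  have hterm : ∀ k ∈ range (n + 1),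
      (n.choose k : ℝ) * (3 * ((k : ℝ) / n) - 2 * ((k : ℝ) / n) ^ 2) ≤
        √2 * ((n.choose k : ℝ) * ((k : ℝ) / n) ^ (1 / p)) := by
    intro k hk
    have hx0 : (0 : ℝ) ≤ k / n := by positivity
    have hx1 : (k : ℝ) / n ≤ 1 :=
      div_le_one_of_le₀ (by exact_mod_cast mem_range_succ_iff.1 hk) hn'.le
    have hsqrt : √((k : ℝ) / n) ≤ ((k : ℝ) / n) ^ (1 / p) := by
      rw [sqrt_eq_rpow]
      exact rpow_le_rpow_of_exponent_ge' hx0 hx1 (by positivity) (by gcongr)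
    calc (n.choose k : ℝ) * (3 * ((k : ℝ) / n) - 2 * ((k : ℝ) / n) ^ 2)
        ≤ (n.choose k : ℝ) * (√2 * √((k : ℝ) / n)) := by
          gcongr
          exact three_mul_sub_two_mul_sq_le_sqrt_two_mul_sqrt hx0
      _ ≤ √2 * ((n.choose k : ℝ) * ((k : ℝ) / n) ^ (1 / p)) := by
          rw [mul_left_comm]
          gcongr
  have hsum := mul_le_mul_of_nonneg_left (sum_le_sum hterm) (sqrt_nonneg 2)
  rw [sum_range_choose_mul_three_mul_sub_two_mul_sq hn, ← mul_sum, ← mul_assoc √2 √2,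
    mul_self_sqrt zero_le_two] at hsum
  rw [psiN, sub_add_cancel, rpow_sub two_pos, rpow_one, rpow_natCast, div_mul_eq_mul_div,
    le_div_iff₀ (by positivity)]
  linarith

theorem two_rpow_one_div_lt {n : ℕ} (hn : 5 ≤ n) {p : ℝ} (hp : 2 + 10 / n < p) :
    (2 : ℝ) ^ (1 / p) < √2 * (1 - 1 / (2 * n)) := by
  have hn' : (5 : ℝ) ≤ n := by exact_mod_cast hn
  have hgap : 10 < (p - 2) * n := by
    rw [← div_lt_iff₀ (by positivity)]
    linarith
  have hp2 : 2 < p := by nlinarith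
  set u := (p - 2) / (2 * p) * log 2 with hu
  have hsplit : (2 : ℝ) ^ (1 / p) = √2 * exp (-u) := by
    rw [sqrt_eq_rpow, rpow_def_of_pos two_pos, rpow_def_of_pos two_pos, ← exp_add, hu]
    congr 1
    field_simp
    ring
  have hratio : 5 / (2 * n + 10) < (p - 2) / (2 * p) := by
    rw [div_lt_div_iff₀ (by positivity) (by positivity)]
    nlinarith
  have hu_large : 1 < u * (2 * n - 1) := by
    have hlog : (1 : ℝ) / 2 < log 2 := lt_trans (by norm_num) log_two_gt_d9
    calc (1 : ℝ) ≤ 5 * (2 * n - 1) / (2 * (2 * n + 10)) := by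
          rw [le_div_iff₀ (by positivity)]
          linarith
      _ = 5 / (2 * n + 10) * (1 / 2) * (2 * n - 1) := by field_simp
      _ < u * (2 * n - 1) := by
        rw [hu]
        gcongr
        linarith
  have hexp : exp (-u) * (1 + u) ≤ 1 := by
    rw [exp_neg, inv_mul_le_one₀ (exp_pos u)]
    linarith [add_one_le_exp u]
  have hu_pos : 0 < 1 + u := by
    have : 0 < u := by positivity
    linarith
  have hmain : exp (-u) < 1 - 1 / (2 * n) := by
    refine lt_of_mul_lt_mul_right (hexp.trans_lt ?_) hu_pos.le
    field_simp
    nlinarith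
  rw [hsplit]
  exact mul_lt_mul_of_pos_left hmain (by positivity)

theorem psiN_pos {n : ℕ} (hn : 5 ≤ n) {p : ℝ} (hp : 2 + 10 / n < p) : 0 < psiN n p := by
  have hp2 : 2 ≤ p := le_trans (le_add_of_nonneg_right (by positivity)) hp.le
  linarith [sqrt_two_mul_one_sub_le_psiN_add (by omega : n ≠ 0) hp2, two_rpow_one_div_lt hn hp]

theorem stmt9 (pn : ℕ → ℝ)
    (hroot : ∀ n : ℕ, 2 ≤ n → pn n ∈ Set.Ioi (2 : ℝ) ∧ psiN n (pn n) = 0) :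
    ∃ C > (0 : ℝ), ∃ N : ℕ, ∀ n : ℕ, N ≤ n →
      0 < pn n - 2 ∧ pn n - 2 ≤ C / n := by
  refine ⟨10, by norm_num, 5, fun n hn => ?_⟩
  obtain ⟨hgt, hzero⟩ := hroot n (by omega)
  refine ⟨sub_pos.2 hgt, ?_⟩
  by_contra! hlarge
  exact (psiN_pos hn (by linarith)).ne' hzero
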